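/- Let u : ℝ³ → ℝ³ and p : ℝ³ → ℝ be twice continuously differentiable and satisfy the steady incompressible Euler equation (u·∇)u = −∇p. Let φ : I → ℝ³ be a C³ arclength streamline (φ′(s) = u(φ(s))/|u(φ(s))|, u(φ(s)) ≠ 0) with curvature κ(s) = |φ″(s)| > 0, unit tangent τ = φ′, unit normal n = φ″/κ, binormal b = τ × n, and torsion T defined by b′ = −T n. Then for all s ∈ I: −(Hess p)(φ(s))[τ(s), b(s)] = T(s) κ(s) |u(φ(s))|². (This is the second identity of the paper's Lemma rewriting the Euler equations via curvature and torsion: T κ |u|² = ∂_{z̄} D_t|u|.) -/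

import Mathlib

open Filter Topology RealInnerProductSpace

/-!
Along the streamline `u ∘ φ = |u| τ`, hence the component of `Du(φ) τ = (u ∘ φ)′` orthogonal
to `τ` is `|u| φ″ = |u| κ n`, and the Euler equation `∇p = -Du(u) = -|u| Du(φ) τ` gives
`⟪∇p(φ), b⟫ = 0` and `⟪∇p(φ), n⟫ = -κ |u|²`. Differentiating `⟪∇p(φ), b⟫ ≡ 0` along the
curve yields `(Hess p)[τ, b] + ⟪∇p(φ), b′⟫ = 0`, and `b′ = -T n` finishes the computation.
-/

/-- Cross product on `EuclideanSpace ℝ (Fin 3)`. -/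
noncomputable def cross3 (v w : EuclideanSpace ℝ (Fin 3)) : EuclideanSpace ℝ (Fin 3) :=
  (WithLp.equiv 2 (Fin 3 → ℝ)).symm
    ![v 1 * w 2 - v 2 * w 1, v 2 * w 0 - v 0 * w 2, v 0 * w 1 - v 1 * w 0]

lemma inner_cross3_self_left (v w : EuclideanSpace ℝ (Fin 3)) : ⟪v, cross3 v w⟫ = 0 := by
  simp [cross3, PiLp.inner_apply, Fin.sum_univ_three]
  ring

lemma inner_cross3_self_right (v w : EuclideanSpace ℝ (Fin 3)) : ⟪w, cross3 v w⟫ = 0 := by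
  simp [cross3, PiLp.inner_apply, Fin.sum_univ_three]
  ring

section InnerProductSpace

variable {E : Type*} [NormedAddCommGroup E] [InnerProductSpace ℝ E]

lemma inner_inv_norm_smul_self (v : E) : ⟪v, ‖v‖⁻¹ • v⟫ = ‖v‖ := by
  rcases eq_or_ne v 0 with rfl | hv
  · simp
  · rw [real_inner_smul_right, real_inner_self_eq_norm_sq]
    field_simp [norm_ne_zero_iff.mpr hv]

lemma norm_smul_inv_norm_smul_self (v : E) : ‖v‖ • ‖v‖⁻¹ • v = v := by
  rcases eq_or_ne v 0 with rfl | hv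
  · simp
  · exact smul_inv_smul₀ (norm_ne_zero_iff.mpr hv) v

lemma HasDerivAt.inner_self_eq_zero_of_eventually_norm_eq {f : ℝ → E} {f' : E} {s c : ℝ}
    (hf : HasDerivAt f f' s) (hc : ∀ᶠ t in 𝓝 s, ‖f t‖ = c) : ⟪f s, f'⟫ = 0 := by
  have hconst : (fun t => ⟪f t, f t⟫) =ᶠ[𝓝 s] fun _ => c ^ 2 := by
    filter_upwards [hc] with t ht
    rw [real_inner_self_eq_norm_sq, ht]
  have hsum := ((hf.inner ℝ hf).congr_of_eventuallyEq hconst.symm).unique (hasDerivAt_const s _)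
  rw [real_inner_comm (f s)] at hsum
  linarith

/-- Differentiating `w = ⟪w, τ⟫ • τ` kills the `⟪w, τ⟫′ • τ` term against any `v ⊥ τ`. -/
lemma HasDerivAt.inner_eq_of_eventually_parallel {w τ : ℝ → E} {w' τ' v : E} {s : ℝ}
    (hw : HasDerivAt w w' s) (hτ : HasDerivAt τ τ' s)
    (hpar : ∀ᶠ t in 𝓝 s, w t = ⟪w t, τ t⟫ • τ t) (hv : ⟪τ s, v⟫ = 0) :
    ⟪w', v⟫ = ⟪w s, τ s⟫ * ⟪τ', v⟫ := by
  have hprod := (hw.inner ℝ hτ).smul hτ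
  rw [← (hprod.congr_of_eventuallyEq hpar).unique hw, inner_add_left, real_inner_smul_left,
    real_inner_smul_left, hv, mul_zero, add_zero]

end InnerProductSpace

lemma inner_gradient_comp_streamline {E : Type*} [NormedAddCommGroup E] [InnerProductSpace ℝ E]
    [CompleteSpace E] {u : E → E} {p : E → ℝ} {φ φ' : ℝ → E} {φ'' v : E} {s : ℝ}
    (hu : DifferentiableAt ℝ u (φ s)) (heuler : ∀ x, fderiv ℝ u x (u x) = -gradient p x)
    (hφ : HasDerivAt φ (φ' s) s) (hφ' : HasDerivAt φ' φ'' s)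
    (hstream : ∀ᶠ t in 𝓝 s, φ' t = ‖u (φ t)‖⁻¹ • u (φ t)) (hv : ⟪φ' s, v⟫ = 0) :
    ⟪gradient p (φ s), v⟫ = -(‖u (φ s)‖ ^ 2 * ⟪φ'', v⟫) := by
  have hpar : ∀ᶠ t in 𝓝 s, u (φ t) = ⟪u (φ t), φ' t⟫ • φ' t := by
    filter_upwards [hstream] with t ht
    rw [ht, inner_inv_norm_smul_self, norm_smul_inv_norm_smul_self]
  have hDu := (hu.hasFDerivAt.comp_hasDerivAt s hφ).inner_eq_of_eventually_parallel hφ' hpar hv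
  have hgrad : gradient p (φ s) = -(‖u (φ s)‖ • fderiv ℝ u (φ s) (φ' s)) := by
    rw [← map_smul, hstream.self_of_nhds, norm_smul_inv_norm_smul_self, heuler, neg_neg]
  rw [hgrad, inner_neg_left, real_inner_smul_left, hDu, Function.comp_apply,
    hstream.self_of_nhds, inner_inv_norm_smul_self]
  ring

lemma fderiv_fderiv_apply_eq_neg_of_eventually_eq_zero {E F : Type*} [NormedAddCommGroup E]
    [NormedSpace ℝ E] [NormedAddCommGroup F] [NormedSpace ℝ F] {p : E → F} {φ b : ℝ → E}
    {φ' b' : E} {s : ℝ} (hp : DifferentiableAt ℝ (fderiv ℝ p) (φ s))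
    (hφ : HasDerivAt φ φ' s) (hb : HasDerivAt b b' s)
    (hzero : ∀ᶠ t in 𝓝 s, fderiv ℝ p (φ t) (b t) = 0) :
    fderiv ℝ (fderiv ℝ p) (φ s) φ' (b s) = -fderiv ℝ p (φ s) b' := by
  have hderiv := (hp.hasFDerivAt.comp_hasDerivAt s hφ).clm_apply hb
  exact eq_neg_of_add_eq_zero_left <|
    (hderiv.congr_of_eventuallyEq (EventuallyEq.symm hzero)).unique (hasDerivAt_const s 0)

theorem euler_torsion_identity_binormal_general
    (u : EuclideanSpace ℝ (Fin 3) → EuclideanSpace ℝ (Fin 3))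
    (p : EuclideanSpace ℝ (Fin 3) → ℝ)
    (hu : ContDiff ℝ 2 u) (hp : ContDiff ℝ 2 p)
    (heuler : ∀ x, fderiv ℝ u x (u x) = - gradient p x)
    (I : Set ℝ) (hI : IsOpen I)
    (φ φ' φ'' : ℝ → EuclideanSpace ℝ (Fin 3))
    (hφ' : ∀ s ∈ I, HasDerivAt φ (φ' s) s)
    (hφ'' : ∀ s ∈ I, HasDerivAt φ' (φ'' s) s)
    (hune : ∀ s ∈ I, u (φ s) ≠ 0)
    (hstream : ∀ s ∈ I, φ' s = ‖u (φ s)‖⁻¹ • u (φ s))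
    (κ : ℝ → ℝ) (hκ : ∀ s ∈ I, κ s = ‖φ'' s‖) (hκpos : ∀ s ∈ I, 0 < κ s)
    (τ n b : ℝ → EuclideanSpace ℝ (Fin 3))
    (hτ : ∀ s ∈ I, τ s = φ' s) (hn : ∀ s ∈ I, n s = (κ s)⁻¹ • φ'' s)
    (hb : ∀ s ∈ I, b s = cross3 (τ s) (n s))
    (T : ℝ → ℝ)
    (hT : ∀ s ∈ I, HasDerivAt b (-(T s) • n s) s) :
    ∀ s ∈ I,
      -((fderiv ℝ (fderiv ℝ p) (φ s) (τ s)) (b s))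
        = T s * κ s * ‖u (φ s)‖ ^ 2 := by
  intro s hs
  have hnear {t : ℝ} (ht : t ∈ I) : ∀ᶠ t' in 𝓝 t, t' ∈ I := hI.mem_nhds ht
  have hgrad {t : ℝ} (ht : t ∈ I) {v} (hv : ⟪φ' t, v⟫ = 0) :
      ⟪gradient p (φ t), v⟫ = -(‖u (φ t)‖ ^ 2 * ⟪φ'' t, v⟫) :=
    inner_gradient_comp_streamline (p := p) ((hu.differentiable two_ne_zero).differentiableAt)
      heuler (hφ' t ht) (hφ'' t ht) ((hnear ht).mono hstream) hv
  have hφ''_eq {t : ℝ} (ht : t ∈ I) : φ'' t = κ t • n t := by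
    rw [hn t ht, smul_inv_smul₀ (hκpos t ht).ne']
  have hgrad_b : ∀ t ∈ I, ⟪gradient p (φ t), b t⟫ = 0 := fun t ht => by
    rw [hgrad ht (by rw [hb t ht, ← hτ t ht]; exact inner_cross3_self_left _ _), hφ''_eq ht,
      real_inner_smul_left, hb t ht, inner_cross3_self_right, mul_zero, mul_zero, neg_zero]
  have hunit : ∀ᶠ t in 𝓝 s, ‖φ' t‖ = 1 := (hnear hs).mono fun t ht => by
    rw [hstream t ht, norm_smul, norm_inv, norm_norm,
      inv_mul_cancel₀ (norm_ne_zero_iff.mpr (hune t ht))]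
  have hgrad_n : ⟪gradient p (φ s), n s⟫ = -(‖u (φ s)‖ ^ 2 * κ s) := by
    have horth := (hφ'' s hs).inner_self_eq_zero_of_eventually_norm_eq hunit
    rw [hgrad hs (by rw [hn s hs, real_inner_smul_right, horth, mul_zero]), hn s hs,
      real_inner_smul_right, real_inner_self_eq_norm_sq, ← hκ s hs]
    field_simp [(hκpos s hs).ne']
  have hhess := fderiv_fderiv_apply_eq_neg_of_eventually_eq_zero
    (((hp.fderiv_right (m := 1) le_rfl).differentiable one_ne_zero).differentiableAt)
    (hφ' s hs) (hT s hs)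
    ((hnear hs).mono fun t ht => by rw [← inner_gradient_left, hgrad_b t ht])
  rw [hτ s hs, hhess, neg_neg, map_smul, ← inner_gradient_left, hgrad_n, smul_eq_mul]
  ring

/-- Second curvature/torsion identity for the steady Euler equations along a
C³ arclength streamline: `−(Hess p)[τ, b] = T κ |u|²` (the paper's
`T κ |u|² = ∂_{z̄} D_t|u|`), the torsion `T` being defined by `b′ = −T n`. -/
theorem euler_torsion_identity_binormal
    (u : EuclideanSpace ℝ (Fin 3) → EuclideanSpace ℝ (Fin 3))
    (p : EuclideanSpace ℝ (Fin 3) → ℝ)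
    (hu : ContDiff ℝ 2 u) (hp : ContDiff ℝ 2 p)
    (heuler : ∀ x, fderiv ℝ u x (u x) = - gradient p x)
    (hdiv : ∀ x, LinearMap.trace ℝ (EuclideanSpace ℝ (Fin 3))
      ((fderiv ℝ u x).toLinearMap) = 0)
    (I : Set ℝ) (hI : IsOpen I)
    (φ φ' φ'' φ''' : ℝ → EuclideanSpace ℝ (Fin 3))
    (hφ' : ∀ s ∈ I, HasDerivAt φ (φ' s) s)
    (hφ'' : ∀ s ∈ I, HasDerivAt φ' (φ'' s) s)
    (hφ''' : ∀ s ∈ I, HasDerivAt φ'' (φ''' s) s)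
    (hune : ∀ s ∈ I, u (φ s) ≠ 0)
    (hstream : ∀ s ∈ I, φ' s = ‖u (φ s)‖⁻¹ • u (φ s))
    (κ : ℝ → ℝ) (hκ : ∀ s ∈ I, κ s = ‖φ'' s‖) (hκpos : ∀ s ∈ I, 0 < κ s)
    (τ n b : ℝ → EuclideanSpace ℝ (Fin 3))
    (hτ : ∀ s ∈ I, τ s = φ' s) (hn : ∀ s ∈ I, n s = (κ s)⁻¹ • φ'' s)
    (hb : ∀ s ∈ I, b s = cross3 (τ s) (n s))
    (T : ℝ → ℝ)
    (hT : ∀ s ∈ I, HasDerivAt b (-(T s) • n s) s) :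
    ∀ s ∈ I,
      -((fderiv ℝ (fderiv ℝ p) (φ s) (τ s)) (b s))
        = T s * κ s * ‖u (φ s)‖ ^ 2 :=
  euler_torsion_identity_binormal_general u p hu hp heuler I hI φ φ' φ'' hφ' hφ'' hune hstream κ hκ
    hκpos τ n b hτ hn hb T hT
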